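/- arXiv:2108.11003 — 10 statements merged into one kernel-verified Lean document; each statement's English description precedes it below -/
import Mathlib

section
/- For every natural number n ≥ 1, one has √(2πn)·(n/e)^n·e^{1/(12n+1)} ≤ n! ≤ √(2πn)·(n/e)^n·e^{1/(12n)}. -/
open Real Filter Stirling


private lemma pow3_ge (k : ℕ) : 2 * (k : ℝ) + 3 ≤ 3 ^ (k + 1) := by
  induction k with
  | zero => norm_num
  | succ j ih =>
    have h3 : (1 : ℝ) ≤ 3 ^ (j + 1) := one_le_pow₀ (by norm_num)
    push_cast
    push_cast at ih
    calc 2 * ((j : ℝ) + 1) + 3 = (2 * j + 3) + 2 := by ring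
    _ ≤ 3 ^ (j + 1) + 2 * 3 ^ (j + 1) := by linarith
    _ = 3 ^ (j + 1 + 1) := by ring

private lemma step_upper (m : ℕ) :
    log (stirlingSeq (m + 1)) - log (stirlingSeq (m + 2)) ≤
      1 / (12 * ((m : ℝ) + 1)) - 1 / (12 * ((m : ℝ) + 2)) := by
  have hm : (0 : ℝ) ≤ (m : ℝ) := Nat.cast_nonneg m
  set x : ℝ := 2 * (↑(m + 1) : ℝ) + 1 with hx
  have hxval : x = 2 * (m : ℝ) + 3 := by rw [hx]; push_cast; ring
  have hxpos : (0 : ℝ) < x := by rw [hxval]; linarith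
  set s : ℝ := (1 / x) ^ 2 with hs
  have hs0 : (0 : ℝ) ≤ s := sq_nonneg _
  have hs1 : s < 1 := by
    rw [hs, div_pow, one_pow, div_lt_one (by positivity)]
    nlinarith
  have hgeo : HasSum (fun k : ℕ => (1/3 : ℝ) * s ^ (k + 1)) (s / 3 * (1 - s)⁻¹) := by
    have h := (hasSum_geometric_of_lt_one hs0 hs1).mul_left (s / 3)
    have e : (fun k : ℕ => (1/3 : ℝ) * s ^ (k + 1)) = fun k => s / 3 * s ^ k := by
      funext k; rw [pow_succ]; ring
    rw [e]; exact h
  have hab : ∀ k : ℕ, (1 : ℝ) / (2 * ↑(k + 1) + 1) * ((1 / (2 * (↑(m + 1) : ℝ) + 1)) ^ 2) ^ (k + 1)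
      ≤ (1/3 : ℝ) * s ^ (k + 1) := by
    intro k
    have h1 : ((1 / (2 * (↑(m + 1) : ℝ) + 1)) ^ 2) ^ (k + 1) = s ^ (k + 1) := by rw [hs, hx]
    rw [h1]
    have h2 : (1 : ℝ) / (2 * ↑(k + 1) + 1) ≤ 1/3 := by
      apply div_le_div_of_nonneg_left (by norm_num) (by norm_num)
      push_cast; linarith [Nat.cast_nonneg (α := ℝ) k]
    exact mul_le_mul_of_nonneg_right h2 (pow_nonneg hs0 _)
  have hle := hasSum_le hab (log_stirlingSeq_diff_hasSum m) hgeo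
  refine hle.trans_eq ?_
  have h1s : (0:ℝ) < 1 - s := by linarith
  have hm1 : (m : ℝ) + 1 ≠ 0 := by positivity
  have hm2 : (m : ℝ) + 2 ≠ 0 := by positivity
  have e1 : s / 3 * (1 - s)⁻¹ = s / (3 * (1 - s)) := by
    rw [div_eq_mul_inv, mul_assoc, ← mul_inv, ← div_eq_mul_inv]
  rw [e1, div_eq_iff (by positivity : (3:ℝ) * (1 - s) ≠ 0)]
  rw [hs, hxval]
  have h23 : (2 * (m:ℝ) + 3) ≠ 0 := by positivity
  field_simp
  ring

private lemma step_lower (m : ℕ) :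
    1 / (12 * ((m : ℝ) + 1) + 1) - 1 / (12 * ((m : ℝ) + 2) + 1) ≤
      log (stirlingSeq (m + 1)) - log (stirlingSeq (m + 2)) := by
  have hm : (0 : ℝ) ≤ (m : ℝ) := Nat.cast_nonneg m
  set x : ℝ := 2 * (↑(m + 1) : ℝ) + 1 with hx
  have hxval : x = 2 * (m : ℝ) + 3 := by rw [hx]; push_cast; ring
  have hxpos : (0 : ℝ) < x := by rw [hxval]; linarith
  set s : ℝ := (1 / x) ^ 2 with hs
  have hs0 : (0 : ℝ) ≤ s := sq_nonneg _
  have hs1 : s < 1 := by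
    rw [hs, div_pow, one_pow, div_lt_one (by positivity)]
    nlinarith
  set r : ℝ := s / 3 with hr
  have hr0 : (0 : ℝ) ≤ r := by positivity
  have hr1 : r < 1 := by rw [hr]; linarith
  have hgeo : HasSum (fun k : ℕ => r ^ (k + 1)) (r * (1 - r)⁻¹) := by
    have h := (hasSum_geometric_of_lt_one hr0 hr1).mul_left r
    have e : (fun k : ℕ => r ^ (k + 1)) = fun k => r * r ^ k := by
      funext k; rw [pow_succ]; ring
    rw [e]; exact h
  have hab : ∀ k : ℕ, r ^ (k + 1) ≤
      (1 : ℝ) / (2 * ↑(k + 1) + 1) * ((1 / (2 * (↑(m + 1) : ℝ) + 1)) ^ 2) ^ (k + 1) := by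
    intro k
    have h1 : ((1 / (2 * (↑(m + 1) : ℝ) + 1)) ^ 2) ^ (k + 1) = s ^ (k + 1) := by rw [hs, hx]
    rw [h1, hr, div_pow]
    rw [div_le_iff₀ (by positivity)]
    have h2 : s ^ (k + 1) * 3 ^ (k + 1) * ((1:ℝ) / (2 * ↑(k + 1) + 1)) ≥ s ^ (k + 1) := by
      have h3 : (1:ℝ) ≤ 3 ^ (k + 1) * (1 / (2 * (↑(k + 1):ℝ) + 1)) := by
        rw [mul_one_div, le_div_iff₀ (by push_cast; linarith [Nat.cast_nonneg (α := ℝ) k])]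
        have := pow3_ge k
        push_cast
        linarith
      calc s ^ (k + 1) = s ^ (k + 1) * 1 := (mul_one _).symm
      _ ≤ s ^ (k + 1) * (3 ^ (k + 1) * (1 / (2 * (↑(k + 1):ℝ) + 1))) :=
          mul_le_mul_of_nonneg_left h3 (pow_nonneg hs0 _)
      _ = s ^ (k + 1) * 3 ^ (k + 1) * (1 / (2 * (↑(k + 1):ℝ) + 1)) := by ring
    calc s ^ (k + 1) ≤ s ^ (k + 1) * 3 ^ (k + 1) * ((1:ℝ) / (2 * ↑(k + 1) + 1)) := h2
    _ = 1 / (2 * ↑(k + 1) + 1) * s ^ (k + 1) * 3 ^ (k + 1) := by ring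
  have hge := hasSum_le hab hgeo (log_stirlingSeq_diff_hasSum m)
  refine le_trans ?_ hge
  have h1r : (0:ℝ) < 1 - r := by linarith
  have hA : r * (1 - r)⁻¹ = 1 / (3 * x ^ 2 - 1) := by
    rw [hr, hs]
    field_simp
  rw [hA, hxval]
  have ha : (12 * ((m:ℝ) + 1) + 1) ≠ 0 := by positivity
  have hb : (12 * ((m:ℝ) + 2) + 1) ≠ 0 := by positivity
  rw [div_sub_div _ _ ha hb]
  rw [div_le_div_iff₀ (by positivity) (by nlinarith)]
  nlinarith [sq_nonneg ((m:ℝ)), hm]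


private lemma mono_nonpos {g : ℕ → ℝ} (hg : Filter.Tendsto g atTop (nhds 0))
    (hstep : ∀ k, g k ≤ g (k + 1)) (k : ℕ) : g k ≤ 0 :=
  ge_of_tendsto hg (Filter.eventually_atTop.2 ⟨k, fun _ hj => monotone_nat_of_le_succ hstep hj⟩)

private lemma anti_nonneg {g : ℕ → ℝ} (hg : Filter.Tendsto g atTop (nhds 0))
    (hstep : ∀ k, g (k + 1) ≤ g k) (k : ℕ) : 0 ≤ g k :=
  le_of_tendsto hg (Filter.eventually_atTop.2 ⟨k, fun _ hj => antitone_nat_of_succ_le hstep hj⟩)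

private lemma E_tendsto :
    Tendsto (fun m : ℕ => log (stirlingSeq (m + 1)) - log (Real.sqrt π)) atTop (nhds 0) := by
  have h1 : Tendsto (fun m : ℕ => stirlingSeq (m + 1)) atTop (nhds (Real.sqrt π)) :=
    tendsto_stirlingSeq_sqrt_pi.comp (tendsto_add_atTop_nat 1)
  have hπ : (0:ℝ) < Real.sqrt π := Real.sqrt_pos.2 Real.pi_pos
  have h2 : Tendsto (fun m : ℕ => log (stirlingSeq (m + 1))) atTop (nhds (log (Real.sqrt π))) :=
    ((Real.continuousAt_log hπ.ne').tendsto).comp h1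
  simpa using h2.sub (tendsto_const_nhds (x := log (Real.sqrt π)))

private lemma aux_atTop : Tendsto (fun m : ℕ => 12 * ((m:ℝ) + 1)) atTop atTop := by
  have hA : Tendsto (fun m : ℕ => (m:ℝ) + 1) atTop atTop :=
    tendsto_atTop_add_const_right _ 1 tendsto_natCast_atTop_atTop
  exact hA.const_mul_atTop (by norm_num)

private lemma inv_tendsto1 : Tendsto (fun m : ℕ => 1 / (12 * ((m:ℝ) + 1))) atTop (nhds 0) := by
  refine Tendsto.congr (fun m => ?_) aux_atTop.inv_tendsto_atTop
  simp [one_div]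

private lemma inv_tendsto2 : Tendsto (fun m : ℕ => 1 / (12 * ((m:ℝ) + 1) + 1)) atTop (nhds 0) := by
  refine Tendsto.congr (fun m => ?_) (tendsto_atTop_add_const_right _ 1 aux_atTop).inv_tendsto_atTop
  simp [one_div]

private lemma E_bounds (m : ℕ) :
    1 / (12 * ((m:ℝ) + 1) + 1) ≤ log (stirlingSeq (m + 1)) - log (Real.sqrt π) ∧
    log (stirlingSeq (m + 1)) - log (Real.sqrt π) ≤ 1 / (12 * ((m:ℝ) + 1)) := by
  constructor
  · have h := anti_nonneg
      (g := fun k : ℕ => (log (stirlingSeq (k + 1)) - log (Real.sqrt π)) - 1 / (12 * ((k:ℝ) + 1) + 1))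
      (by simpa using E_tendsto.sub inv_tendsto2) ?_ m
    · linarith [h]
    · intro k
      have hs := step_lower k
      have : ((k:ℝ) + 1) + 1 = (k:ℝ) + 2 := by ring
      push_cast
      push_cast at hs
      ring_nf at hs ⊢
      linarith
  · have h := mono_nonpos
      (g := fun k : ℕ => (log (stirlingSeq (k + 1)) - log (Real.sqrt π)) - 1 / (12 * ((k:ℝ) + 1)))
      (by simpa using E_tendsto.sub inv_tendsto1) ?_ m
    · linarith [h]
    · intro k
      have hs := step_upper k
      push_cast
      push_cast at hs
      ring_nf at hs ⊢
      linarith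


/-- Stirling's bounds with explicit error terms:
`√(2πn)·(n/e)^n·e^{1/(12n+1)} ≤ n! ≤ √(2πn)·(n/e)^n·e^{1/(12n)}` for `n ≥ 1`. -/
theorem stirling_bounds (n : ℕ) (hn : 1 ≤ n) :
    Real.sqrt (2 * π * n) * ((n : ℝ) / Real.exp 1) ^ n * Real.exp (1 / (12 * n + 1))
        ≤ (Nat.factorial n : ℝ) ∧
    (Nat.factorial n : ℝ) ≤ Real.sqrt (2 * π * n) * ((n : ℝ) / Real.exp 1) ^ n
        * Real.exp (1 / (12 * n)) := by
  obtain ⟨m, rfl⟩ : ∃ m, n = m + 1 := ⟨n - 1, (Nat.succ_pred_eq_of_pos hn).symm⟩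
  obtain ⟨hlo, hhi⟩ := E_bounds m
  have hπ := Real.pi_pos
  have hN : (0:ℝ) < (m:ℝ) + 1 := by positivity
  have hfac : (0:ℝ) < ((m+1).factorial : ℝ) := by exact_mod_cast (m+1).factorial_pos
  have hform := log_stirlingSeq_formula (m+1)
  have hsq : Real.log (Real.sqrt π) = Real.log π / 2 := Real.log_sqrt hπ.le
  have hsplit : Real.log (2 * π * ((m:ℝ)+1)) = Real.log (2 * ((m:ℝ)+1)) + Real.log π := by
    rw [show (2:ℝ) * π * ((m:ℝ)+1) = (2*((m:ℝ)+1)) * π by ring,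
      Real.log_mul (by positivity) hπ.ne']
  rw [hsq] at hlo hhi
  push_cast at hform hlo hhi ⊢
  constructor
  · rw [← Real.log_le_log_iff (by positivity) hfac]
    rw [Real.log_mul (by positivity) (Real.exp_pos _).ne',
      Real.log_mul (by positivity) (by positivity), Real.log_exp, Real.log_pow,
      Real.log_sqrt (by positivity)]
    push_cast
    linarith [hsplit]
  · rw [← Real.log_le_log_iff hfac (by positivity)]
    rw [Real.log_mul (by positivity) (Real.exp_pos _).ne',
      Real.log_mul (by positivity) (by positivity), Real.log_exp, Real.log_pow,
      Real.log_sqrt (by positivity)]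
    push_cast
    linarith [hsplit]
end

section
/- Let d ≥ 2, l ≥ 2 be integers. The equation (1 - dβ)^l = β(1-β)^{l-1} has a unique root β* in the open interval (0, 1/d). -/
/-!
For `a < b` in `(0, 1/d)` both `a (1 - d b) < b (1 - d a)` and, since `d ≥ 1`,
`(1 - a)(1 - d b) ≤ (1 - b)(1 - d a)`. Multiplying these out, with `m = l - 1`, shows that
`β (1 - β)^m / (1 - dβ)^(m+1)` is strictly increasing there, so the equation has at most one
root. It has one by the intermediate value theorem: the difference of the two sides changes sign
between `0` and `1/d`.
-/

open Set

namespace BetaStar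

variable {d : ℝ}

theorem mul_pow_mul_pow_lt (m : ℕ) (hd : 1 ≤ d) {a b : ℝ} (ha : 0 < a) (hab : a < b)
    (hb : d * b < 1) :
    a * (1 - a) ^ m * (1 - d * b) ^ (m + 1) < b * (1 - b) ^ m * (1 - d * a) ^ (m + 1) := by
  have hda : d * a < d * b := by nlinarith
  have hb1 : b < 1 := by nlinarith
  have h_lin : a * (1 - d * b) < b * (1 - d * a) := by nlinarith
  have h_quad : (1 - a) * (1 - d * b) ≤ (1 - b) * (1 - d * a) := by nlinarith
  calc a * (1 - a) ^ m * (1 - d * b) ^ (m + 1)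
      = a * (1 - d * b) * ((1 - a) * (1 - d * b)) ^ m := by rw [mul_pow]; ring
    _ < b * (1 - d * a) * ((1 - b) * (1 - d * a)) ^ m :=
        mul_lt_mul h_lin (pow_le_pow_left₀ (by nlinarith) h_quad m)
          (pow_pos (by nlinarith) m) (by nlinarith)
    _ = b * (1 - b) ^ m * (1 - d * a) ^ (m + 1) := by rw [mul_pow]; ring

theorem eq_of_root_of_root (m : ℕ) (hd : 1 ≤ d) {a b : ℝ}
    (ha : 0 < a) (hda : d * a < 1) (hroot_a : (1 - d * a) ^ (m + 1) = a * (1 - a) ^ m)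
    (hb : 0 < b) (hdb : d * b < 1) (hroot_b : (1 - d * b) ^ (m + 1) = b * (1 - b) ^ m) :
    a = b := by
  -- at two roots both sides of `mul_pow_mul_pow_lt` equal `(1 - d a)^(m+1) (1 - d b)^(m+1)`
  have h_ne : ∀ {x y : ℝ}, 0 < x → x < y → d * y < 1 →
      (1 - d * x) ^ (m + 1) = x * (1 - x) ^ m → (1 - d * y) ^ (m + 1) = y * (1 - y) ^ m →
      False := fun hx hxy hy hroot_x hroot_y => by
    have := mul_pow_mul_pow_lt m hd hx hxy hy
    rw [← hroot_x, ← hroot_y, mul_comm] at this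
    exact this.false
  rcases lt_trichotomy a b with h | h | h
  · exact (h_ne ha h hdb hroot_a hroot_b).elim
  · exact h
  · exact (h_ne hb h hda hroot_b hroot_a).elim

theorem exists_root (m : ℕ) (hd : 1 < d) :
    ∃ β ∈ Ioo 0 (1 / d), (1 - d * β) ^ (m + 1) = β * (1 - β) ^ m := by
  set g : ℝ → ℝ := fun β => β * (1 - β) ^ m - (1 - d * β) ^ (m + 1)
  have hd0 : 0 < d := by linarith
  have hg_zero : g 0 = -1 := by simp [g]
  have hg_inv : g (1 / d) = 1 / d * (1 - 1 / d) ^ m := by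
    simp [g, mul_inv_cancel₀ hd0.ne']
  have hg_inv_pos : 0 < g (1 / d) := by
    have : 1 / d < 1 := (div_lt_one hd0).mpr hd
    rw [hg_inv]
    exact mul_pos (by positivity) (pow_pos (by linarith) m)
  obtain ⟨β, hβ, hgβ⟩ := intermediate_value_Ioo (by positivity) (by fun_prop : ContinuousOn g _)
    (show (0 : ℝ) ∈ Ioo (g 0) (g (1 / d)) by rw [hg_zero]; exact ⟨by norm_num, hg_inv_pos⟩)
  exact ⟨β, hβ, by linarith [show g β = 0 from hgβ]⟩

theorem existsUnique_root (m : ℕ) (hd : 1 < d) :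
    ∃! β : ℝ, β ∈ Ioo 0 (1 / d) ∧ (1 - d * β) ^ (m + 1) = β * (1 - β) ^ m := by
  have hd0 : 0 < d := by linarith
  obtain ⟨β, hβ, hroot⟩ := exists_root m hd
  refine ⟨β, ⟨hβ, hroot⟩, fun γ ⟨hγ, hroot_γ⟩ => ?_⟩
  exact eq_of_root_of_root m hd.le hγ.1 ((lt_div_iff₀' hd0).mp hγ.2) hroot_γ
    hβ.1 ((lt_div_iff₀' hd0).mp hβ.2) hroot

end BetaStar

/-- The equation `(1 - dβ)^l = β(1-β)^{l-1}` has a unique root in `(0, 1/d)`. -/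
theorem unique_root_beta_star (d l : ℕ) (hd : 2 ≤ d) (hl : 2 ≤ l) :
    ∃! β : ℝ, β ∈ Set.Ioo (0 : ℝ) (1 / d) ∧
      (1 - (d : ℝ) * β) ^ l = β * (1 - β) ^ (l - 1) := by
  obtain ⟨m, rfl⟩ : ∃ m, l = m + 1 := ⟨l - 1, by omega⟩
  have hd' : (1 : ℝ) < d := by exact_mod_cast hd
  simpa only [Nat.add_sub_cancel] using BetaStar.existsUnique_root m hd'
end

section
/- Let d ≥ 2, l ≥ 2, and suppose f := ((l-1)(d-1)/d)·ln((d-1)/d) - (1/d)·ln(1/d) < 0. Then there exists a unique β₀ ∈ (β*, 1/d) with Φ(β₀) = 0; moreover Φ(β) > 0 for β ∈ (0, β₀) and Φ(β) < 0 for β ∈ (β₀, 1/d). -/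
/-!
On `[0, 1/d]` the function `Φ` is continuous and strictly concave, since
`Φ'' β = -1/β + (l-1)/(1-β) - l d/(1-dβ) < 0`. As `Φ 0 = 0`, concavity makes `Φ β / β` strictly
decreasing, so `Φ` changes sign at most once on `(0, 1/d]`. It is positive near `0`, where
`-β log β` dominates, hence `Φ β* > 0`; and `Φ (1/d) = f < 0`. The root therefore exists, is
unique, and lies to the right of `β*`.
-/

open Real Set

theorem StrictConcaveOn.exists_root_sign_change {g : ℝ → ℝ} {b c : ℝ}
    (hg : StrictConcaveOn ℝ (Icc 0 b) g) (hcont : ContinuousOn g (Icc 0 b)) (h0 : g 0 = 0)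
    (hc : c ∈ Icc 0 b) (hgc : 0 < g c) (hgb : g b < 0) :
    ∃ r ∈ Ioo c b, g r = 0 ∧ (∀ x ∈ Ioo c b, g x = 0 → x = r) ∧
      (∀ x ∈ Ioo 0 r, 0 < g x) ∧ (∀ x ∈ Ioo r b, g x < 0) := by
  obtain ⟨r, hr, hgr⟩ := intermediate_value_Icc' hc.2 (hcont.mono (Icc_subset_Icc_left hc.1))
    ⟨hgb.le, hgc.le⟩
  have hcr : c < r := hr.1.lt_of_ne (by rintro rfl; linarith)
  have hrb : r < b := hr.2.lt_of_ne (by rintro rfl; linarith)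
  have hr0 : 0 < r := hc.1.trans_lt hcr
  have slope_lt {x y : ℝ} (hx : 0 < x) (hxy : x < y) (hy : y ≤ b) : g y / y < g x / x := by
    simpa [h0] using hg.secant_strict_mono (a := 0) ⟨le_rfl, hx.le.trans (hxy.le.trans hy)⟩
      ⟨hx.le, hxy.le.trans hy⟩ ⟨(hx.trans hxy).le, hy⟩ hx.ne' (hx.trans hxy).ne' hxy
  have pos : ∀ x ∈ Ioo 0 r, 0 < g x := fun x hx => by
    have := slope_lt hx.1 hx.2 hrb.le
    rw [hgr, zero_div] at this
    exact (div_pos_iff_of_pos_right hx.1).1 this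
  have neg : ∀ x ∈ Ioo r b, g x < 0 := fun x hx => by
    have := slope_lt hr0 hx.1 hx.2.le
    rw [hgr, zero_div] at this
    simpa using (div_lt_iff₀ (hr0.trans hx.1)).1 this
  refine ⟨r, ⟨hcr, hrb⟩, hgr, fun x hx hgx => ?_, pos, neg⟩
  rcases lt_trichotomy x r with hxr | rfl | hxr
  · exact absurd hgx (pos x ⟨hc.1.trans_lt hx.1, hxr⟩).ne'
  · rfl
  · exact absurd hgx (neg x ⟨hxr, hx.2⟩).ne

noncomputable def phi (d l β : ℝ) : ℝ :=
  -β * log β + (l - 1) * (1 - β) * log (1 - β) - (l / d) * (1 - d * β) * log (1 - d * β)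

section

variable {d l : ℝ}

lemma phi_eq_negMulLog (d l : ℝ) :
    phi d l = fun β =>
      negMulLog β - (l - 1) * negMulLog (1 - β) + l / d * negMulLog (1 - d * β) := by
  funext β
  simp only [phi, negMulLog]
  ring

lemma continuous_phi (d l : ℝ) : Continuous (phi d l) := by
  rw [phi_eq_negMulLog]
  fun_prop

lemma phi_zero (d l : ℝ) : phi d l 0 = 0 := by
  simp [phi]

lemma phi_one_div (l : ℝ) (hd : d ≠ 0) :
    phi d l (1 / d) = (l - 1) * (d - 1) / d * log ((d - 1) / d) - 1 / d * log (1 / d) := by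
  have h1 : 1 - d * (1 / d) = 0 := by field_simp; ring
  have h2 : 1 - 1 / d = (d - 1) / d := by field_simp
  simp only [phi, h1, h2, log_zero, mul_zero, sub_zero]
  ring

lemma hasDerivAt_phi {β : ℝ} (hd : d ≠ 0) (hβ : β ≠ 0) (hβ1 : β ≠ 1) (hdβ : d * β ≠ 1) :
    HasDerivAt (phi d l) (-log β - (l - 1) * log (1 - β) + l * log (1 - d * β)) β := by
  have h1 := hasDerivAt_negMulLog hβ
  have h2 := (hasDerivAt_negMulLog (sub_ne_zero.2 hβ1.symm)).comp β ((hasDerivAt_id β).const_sub 1)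
  have h3 := (hasDerivAt_negMulLog (sub_ne_zero.2 hdβ.symm)).comp β
    (((hasDerivAt_id β).const_mul d).const_sub 1)
  rw [phi_eq_negMulLog]
  exact ((h1.sub (h2.const_mul (l - 1))).add (h3.const_mul (l / d))).congr_deriv
    (by field_simp; ring)

lemma hasDerivAt_deriv_phi {β : ℝ} (hβ : β ≠ 0) (hβ1 : β ≠ 1) (hdβ : d * β ≠ 1) :
    HasDerivAt (fun β => -log β - (l - 1) * log (1 - β) + l * log (1 - d * β))
      (-β⁻¹ + (l - 1) / (1 - β) - l * d / (1 - d * β)) β := by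
  have h1 := hasDerivAt_log hβ
  have h2 := ((hasDerivAt_id β).const_sub 1).log (sub_ne_zero.2 hβ1.symm)
  have h3 := (((hasDerivAt_id β).const_mul d).const_sub 1).log (sub_ne_zero.2 hdβ.symm)
  exact ((h1.neg.sub (h2.const_mul (l - 1))).add (h3.const_mul l)).congr_deriv
    (by simp only [id_eq, mul_one]; ring)

lemma lt_one_of_lt_one_div (hd : 1 ≤ d) {β : ℝ} (hβ : β < 1 / d) : β < 1 :=
  hβ.trans_le ((div_le_one (zero_lt_one.trans_le hd)).2 hd)

lemma deriv2_phi_neg (hd : 1 ≤ d) (hl : 0 ≤ l) {β : ℝ} (hβ : 0 < β) (hdβ : d * β < 1) :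
    -β⁻¹ + (l - 1) / (1 - β) - l * d / (1 - d * β) < 0 := by
  have hβ1 : 0 < 1 - β := by nlinarith
  have : (l - 1) / (1 - β) ≤ l * d / (1 - d * β) := by
    rw [div_le_div_iff₀ hβ1 (by linarith)]
    nlinarith [mul_nonneg hl (sub_nonneg.2 hd)]
  linarith [inv_pos.2 hβ]

lemma strictConcaveOn_phi (hd : 1 ≤ d) (hl : 0 ≤ l) :
    StrictConcaveOn ℝ (Icc 0 (1 / d)) (phi d l) := by
  have hd0 : 0 < d := zero_lt_one.trans_le hd
  have hne {β : ℝ} (hβ : β ∈ Ioo 0 (1 / d)) : β ≠ 0 ∧ β ≠ 1 ∧ d * β ≠ 1 :=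
    ⟨hβ.1.ne', (lt_one_of_lt_one_div hd hβ.2).ne, ((lt_div_iff₀' hd0).1 hβ.2).ne⟩
  have hF : StrictAntiOn (fun β => -log β - (l - 1) * log (1 - β) + l * log (1 - d * β))
      (Ioo 0 (1 / d)) := by
    refine strictAntiOn_of_hasDerivWithinAt_neg (convex_Ioo 0 (1 / d))
      (f' := fun β => -β⁻¹ + (l - 1) / (1 - β) - l * d / (1 - d * β)) (fun β hβ => ?_)
      (fun β hβ => ?_) (fun β hβ => ?_)
    · obtain ⟨h0, h1, hd1⟩ := hne hβ
      exact (hasDerivAt_deriv_phi h0 h1 hd1).continuousAt.continuousWithinAt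
    · rw [interior_Ioo] at hβ
      obtain ⟨h0, h1, hd1⟩ := hne hβ
      exact (hasDerivAt_deriv_phi h0 h1 hd1).hasDerivWithinAt
    · rw [interior_Ioo] at hβ
      exact deriv2_phi_neg hd hl hβ.1 ((lt_div_iff₀' hd0).1 hβ.2)
  refine StrictAntiOn.strictConcaveOn_of_deriv (convex_Icc _ _) (continuous_phi d l).continuousOn ?_
  rw [interior_Icc]
  refine hF.congr fun β hβ => ?_
  obtain ⟨h0, h1, hd1⟩ := hne hβ
  exact (hasDerivAt_phi hd0.ne' h0 h1 hd1).deriv.symm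

lemma exists_phi_pos (hd : 1 ≤ d) (hl : 1 ≤ l) : ∃ β ∈ Ioo 0 (1 / d), 0 < phi d l β := by
  have hd0 : 0 < d := zero_lt_one.trans_le hd
  -- chosen so that `-β log β = β (l + log d)` beats the bound `-(l-1) β` on the middle term
  set β := exp (-l) / d
  have hβ : β ∈ Ioo 0 (1 / d) :=
    ⟨by positivity, div_lt_div_of_pos_right (exp_lt_one_iff.2 (by linarith)) hd0⟩
  refine ⟨β, hβ, ?_⟩
  have h2 : negMulLog (1 - β) ≤ β := by
    simpa using negMulLog_le_one_sub_self (sub_nonneg.2 (lt_one_of_lt_one_div hd hβ.2).le)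
  have h3 : 0 ≤ negMulLog (1 - d * β) :=
    negMulLog_nonneg (sub_nonneg.2 ((lt_div_iff₀' hd0).1 hβ.2).le)
      (sub_le_self _ (mul_nonneg hd0.le hβ.1.le))
  have h1 : negMulLog β = β * (l + log d) := by
    simp only [negMulLog, β, log_div (exp_pos _).ne' hd0.ne', log_exp]; ring
  simp only [phi_eq_negMulLog, h1]
  nlinarith [hβ.1, log_nonneg hd, mul_le_mul_of_nonneg_left h2 (sub_nonneg.2 hl),
    mul_nonneg (div_nonneg (zero_le_one.trans hl) hd0.le) h3]

end

/-- If `f = ((l-1)(d-1)/d)ln((d-1)/d) - (1/d)ln(1/d) < 0` and `β*` is the unique maximizer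
of `Φ` on `(0,1/d)`, then there is a unique `β₀ ∈ (β*,1/d)` with `Φ(β₀) = 0`; moreover
`Φ > 0` on `(0,β₀)` and `Φ < 0` on `(β₀,1/d)`. -/
theorem Phi_root_beta_zero (d l : ℕ) (hd : 2 ≤ d) (hl : 2 ≤ l)
    (Φ : ℝ → ℝ)
    (hΦ : Φ = fun β => -β * Real.log β + ((l : ℝ) - 1) * (1 - β) * Real.log (1 - β)
      - ((l : ℝ) / d) * (1 - d * β) * Real.log (1 - d * β))
    (hf : ((l : ℝ) - 1) * ((d : ℝ) - 1) / d * Real.log (((d : ℝ) - 1) / d)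
      - (1 / d) * Real.log (1 / (d : ℝ)) < 0)
    (βs : ℝ) (hβs : βs ∈ Set.Ioo (0 : ℝ) (1 / d))
    (hmax : ∀ β ∈ Set.Ioo (0 : ℝ) (1 / (d : ℝ)), Φ β ≤ Φ βs) :
    ∃ β₀ ∈ Set.Ioo βs (1 / (d : ℝ)), Φ β₀ = 0 ∧
      (∀ β' ∈ Set.Ioo βs (1 / (d : ℝ)), Φ β' = 0 → β' = β₀) ∧
      (∀ β ∈ Set.Ioo (0 : ℝ) β₀, 0 < Φ β) ∧
      (∀ β ∈ Set.Ioo β₀ (1 / (d : ℝ)), Φ β < 0) := by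
  obtain rfl : Φ = phi d l := hΦ
  have hd1 : (1 : ℝ) ≤ d := by exact_mod_cast one_le_two.trans hd
  have hl1 : (1 : ℝ) ≤ l := by exact_mod_cast one_le_two.trans hl
  obtain ⟨β₁, hβ₁, hβ₁_pos⟩ := exists_phi_pos hd1 hl1
  exact (strictConcaveOn_phi hd1 (zero_le_one.trans hl1)).exists_root_sign_change
    (continuous_phi d l).continuousOn (phi_zero d l) ⟨hβs.1.le, hβs.2.le⟩
    (hβ₁_pos.trans_le (hmax β₁ hβ₁)) (by rwa [phi_one_div l (by positivity)])
end

section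
/- Let d ≥ 2, l ≥ 2, β ∈ (0,1/d), and define the second-moment exponent Ψ(ρ,θ) = -ρ ln ρ - θ ln(θ/l) + (l-1)(1-2β+ρ)ln(1-2β+ρ) + θ ln(d-1) + 2(l-1)(β-ρ)ln(β-ρ) - 2l(β-ρ-θ/l)ln(β-ρ-θ/l) - (l/d)(1-2βd+ρd+(θ/l)d)·ln(1-2βd+ρd+(θ/l)d). Then the pair (ρ,θ) = (β², l(d-1)β²) satisfies both equations ∂Ψ/∂ρ = 0 and ∂Ψ/∂θ = 0. -/
open Real

/-!
Every term of `Ψ` has the form `c · u log u` with `u` affine in `(ρ, θ)`, so each partial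
derivative is a combination of the `log u` (the contributions of the `+ 1` in
`(u log u)' = log u + 1` cancel). At `(β², l(d-1)β²)` the arguments factor as `β²`, `(1-β)²`,
`β(1-β)`, `β(1-dβ)`, `(1-dβ)²` and `θ/l = (d-1)β²`, and the resulting multiples of `log β`,
`log (1-β)`, `log (1-dβ)`, `log (d-1)` cancel.
-/

noncomputable def secondMomentExponent (d l β ρ θ : ℝ) : ℝ :=
  -ρ * log ρ - θ * log (θ / l)
    + (l - 1) * (1 - 2 * β + ρ) * log (1 - 2 * β + ρ)
    + θ * log (d - 1)
    + 2 * (l - 1) * (β - ρ) * log (β - ρ)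
    - 2 * l * (β - ρ - θ / l) * log (β - ρ - θ / l)
    - (l / d) * (1 - 2 * β * d + ρ * d + (θ / l) * d)
        * log (1 - 2 * β * d + ρ * d + (θ / l) * d)

namespace secondMomentExponent

variable {d l β ρ θ : ℝ}

theorem hasDerivAt_fst (hd : d ≠ 0) (h₁ : ρ ≠ 0) (h₂ : 1 - 2 * β + ρ ≠ 0) (h₃ : β - ρ ≠ 0)
    (h₄ : β - ρ - θ / l ≠ 0) (h₅ : 1 - 2 * β * d + ρ * d + (θ / l) * d ≠ 0) :
    HasDerivAt (fun ρ => secondMomentExponent d l β ρ θ)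
      (-log ρ + (l - 1) * log (1 - 2 * β + ρ) - 2 * (l - 1) * log (β - ρ)
        + 2 * l * log (β - ρ - θ / l) - l * log (1 - 2 * β * d + ρ * d + (θ / l) * d)) ρ := by
  have hid := hasDerivAt_id' ρ
  have hu₂ := hid.const_add (1 - 2 * β)
  have hu₃ := hid.const_sub β
  have hu₄ := hu₃.sub_const (θ / l)
  have hu₅ := ((hid.mul_const d).const_add (1 - 2 * β * d)).add_const ((θ / l) * d)
  have := (((((((hasDerivAt_neg' ρ).mul (hid.log h₁)).sub
    (hasDerivAt_const ρ (θ * log (θ / l)))).add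
    ((hu₂.const_mul (l - 1)).mul (hu₂.log h₂))).add
    (hasDerivAt_const ρ (θ * log (d - 1)))).add
    ((hu₃.const_mul (2 * (l - 1))).mul (hu₃.log h₃))).sub
    ((hu₄.const_mul (2 * l)).mul (hu₄.log h₄))).sub
    ((hu₅.const_mul (l / d)).mul (hu₅.log h₅))
  refine this.congr_deriv ?_
  -- as atoms, the log arguments let `field_simp` cancel each `u * (u' / u)`
  set u₂ := 1 - 2 * β + ρ
  set u₃ := β - ρ
  set u₄ := β - ρ - θ / l
  set u₅ := 1 - 2 * β * d + ρ * d + (θ / l) * d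
  field_simp
  ring

theorem hasDerivAt_snd (hd : d ≠ 0) (hl : l ≠ 0) (h₀ : θ ≠ 0)
    (h₄ : β - ρ - θ / l ≠ 0) (h₅ : 1 - 2 * β * d + ρ * d + (θ / l) * d ≠ 0) :
    HasDerivAt (fun θ => secondMomentExponent d l β ρ θ)
      (-log (θ / l) + log (d - 1) + 2 * log (β - ρ - θ / l)
        - log (1 - 2 * β * d + ρ * d + (θ / l) * d)) θ := by
  have hid := hasDerivAt_id' θ
  have hθl := hid.div_const l
  have hu₄ := hθl.const_sub (β - ρ)
  have hu₅ := (hθl.mul_const d).const_add (1 - 2 * β * d + ρ * d)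
  have := ((((((hasDerivAt_const θ (-ρ * log ρ)).sub
    (hid.mul (hθl.log (div_ne_zero h₀ hl)))).add
    (hasDerivAt_const θ ((l - 1) * (1 - 2 * β + ρ) * log (1 - 2 * β + ρ)))).add
    (hid.mul_const (log (d - 1)))).add
    (hasDerivAt_const θ (2 * (l - 1) * (β - ρ) * log (β - ρ)))).sub
    ((hu₄.const_mul (2 * l)).mul (hu₄.log h₄))).sub
    ((hu₅.const_mul (l / d)).mul (hu₅.log h₅))
  refine this.congr_deriv ?_
  set u₄ := β - ρ - θ / l
  set u₅ := 1 - 2 * β * d + ρ * d + (θ / l) * d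
  field_simp
  ring

theorem hasDerivAt_fst_eq_zero_of_critical (hd : d ≠ 0) (hl : l ≠ 0) (hβ : β ≠ 0)
    (hβ₁ : 1 - β ≠ 0) (hdβ : 1 - d * β ≠ 0) :
    HasDerivAt (fun ρ => secondMomentExponent d l β ρ (l * (d - 1) * β ^ 2)) 0 (β ^ 2) := by
  have key := hasDerivAt_fst (l := l) (β := β) (ρ := β ^ 2) (θ := l * (d - 1) * β ^ 2) hd
  rw [show l * (d - 1) * β ^ 2 / l = (d - 1) * β ^ 2 by field_simp,
    show β - β ^ 2 - (d - 1) * β ^ 2 = β * (1 - d * β) by ring,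
    show 1 - 2 * β + β ^ 2 = (1 - β) ^ 2 by ring, show β - β ^ 2 = β * (1 - β) by ring,
    show 1 - 2 * β * d + β ^ 2 * d + (d - 1) * β ^ 2 * d = (1 - d * β) ^ 2 by ring] at key
  convert key (pow_ne_zero 2 hβ) (pow_ne_zero 2 hβ₁) (mul_ne_zero hβ hβ₁) (mul_ne_zero hβ hdβ)
    (pow_ne_zero 2 hdβ) using 1
  simp only [log_pow, log_mul hβ hβ₁, log_mul hβ hdβ]
  ring

theorem hasDerivAt_snd_eq_zero_of_critical (hd : d ≠ 0) (hd₁ : d - 1 ≠ 0) (hl : l ≠ 0)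
    (hβ : β ≠ 0) (hdβ : 1 - d * β ≠ 0) :
    HasDerivAt (fun θ => secondMomentExponent d l β (β ^ 2) θ) 0 (l * (d - 1) * β ^ 2) := by
  have key := hasDerivAt_snd (d := d) (β := β) (ρ := β ^ 2) (θ := l * (d - 1) * β ^ 2) hd hl
    (by positivity)
  rw [show l * (d - 1) * β ^ 2 / l = (d - 1) * β ^ 2 by field_simp,
    show β - β ^ 2 - (d - 1) * β ^ 2 = β * (1 - d * β) by ring,
    show 1 - 2 * β * d + β ^ 2 * d + (d - 1) * β ^ 2 * d = (1 - d * β) ^ 2 by ring] at key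
  convert key (mul_ne_zero hβ hdβ) (pow_ne_zero 2 hdβ) using 1
  simp only [log_pow, log_mul hd₁ (pow_ne_zero 2 hβ), log_mul hβ hdβ]
  ring

end secondMomentExponent

/-- The pair `(ρ,θ) = (β², l(d-1)β²)` is a critical point of the second-moment exponent
`Ψ(ρ,θ)`. -/
theorem Psi_critical_point (d l : ℕ) (hd : 2 ≤ d) (hl : 2 ≤ l)
    (β : ℝ) (hβ : β ∈ Set.Ioo (0 : ℝ) (1 / d))
    (Ψ : ℝ → ℝ → ℝ)
    (hΨ : Ψ = fun ρ θ => -ρ * Real.log ρ - θ * Real.log (θ / l)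
      + ((l : ℝ) - 1) * (1 - 2 * β + ρ) * Real.log (1 - 2 * β + ρ)
      + θ * Real.log ((d : ℝ) - 1)
      + 2 * ((l : ℝ) - 1) * (β - ρ) * Real.log (β - ρ)
      - 2 * l * (β - ρ - θ / l) * Real.log (β - ρ - θ / l)
      - ((l : ℝ) / d) * (1 - 2 * β * d + ρ * d + (θ / l) * d)
          * Real.log (1 - 2 * β * d + ρ * d + (θ / l) * d)) :
    deriv (fun ρ => Ψ ρ ((l : ℝ) * ((d : ℝ) - 1) * β ^ 2)) (β ^ 2) = 0 ∧
    deriv (fun θ => Ψ (β ^ 2) θ) ((l : ℝ) * ((d : ℝ) - 1) * β ^ 2) = 0 := by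
  obtain ⟨hβ₀, hβd⟩ := hβ
  have hd₂ : (2 : ℝ) ≤ d := by exact_mod_cast hd
  have hl₂ : (2 : ℝ) ≤ l := by exact_mod_cast hl
  have hdβ : d * β < 1 := by rwa [lt_div_iff₀ (by positivity), mul_comm] at hβd
  have hβ₁ : β < 1 := by nlinarith
  subst hΨ
  have hρ := secondMomentExponent.hasDerivAt_fst_eq_zero_of_critical (d := d) (l := l)
    (by positivity) (by positivity) hβ₀.ne' (by linarith) (by linarith)
  have hθ := secondMomentExponent.hasDerivAt_snd_eq_zero_of_critical (d := d) (l := l)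
    (by positivity) (by linarith) (by positivity) hβ₀.ne' (by linarith)
  exact ⟨hρ.deriv, hθ.deriv⟩
end

section
/- Let d ≥ 2, l ≥ 2, β ∈ (0,1/d), ρ ∈ (0,β), θ ∈ (max{0, 2lβ - lρ - l/d}, lβ - lρ). Then the second partial derivative ∂²Ψ/∂ρ² = -1/ρ + (l-1)/(1-2β+ρ) + 2(l-1)/(β-ρ) - 2l/(β-ρ-θ/l) - ld/(1-2βd+ρd+θd/l) is strictly negative. -/
open Real Filter Topology

/-!
As a function of `ρ`, `Ψ` is a constant plus a linear combination `∑ wᵢ uᵢ log uᵢ` of the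
entropy function composed with affine maps `uᵢ = aᵢ + bᵢ ρ`, so its second derivative is
`∑ wᵢ bᵢ² / uᵢ`. In that sum the two positive terms are dominated by the two negative ones:
`(l - 1)/(1 - 2β + ρ) < l d / X` because `X = 1 - 2βd + ρd + θd/l < d (1 - 2β + ρ)`, which is where
`d ≥ 2` and `θ/l < β - ρ < 1/d` enter, and `2(l - 1)/(β - ρ) < 2l/(β - ρ - θ/l)` because `θ > 0`.
-/

theorem deriv_deriv_eq_of_eventually_hasDerivAt {f f' : ℝ → ℝ} {x f'' : ℝ}
    (hf : ∀ᶠ y in 𝓝 x, HasDerivAt f (f' y) y) (hf' : HasDerivAt f' f'' x) :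
    deriv (deriv f) x = f'' :=
  Filter.EventuallyEq.deriv_eq (hf.mono fun _ hy => hy.deriv) |>.trans hf'.deriv

section MulLogAffine

theorem hasDerivAt_affine (a b t : ℝ) : HasDerivAt (fun t => a + b * t) b t := by
  simpa using ((hasDerivAt_id t).const_mul b).const_add a

theorem hasDerivAt_mul_log_affine {a b t : ℝ} (h : a + b * t ≠ 0) :
    HasDerivAt (fun t => (a + b * t) * log (a + b * t)) (b * (log (a + b * t) + 1)) t := by
  simpa [Function.comp_def, mul_comm] using
    (hasDerivAt_mul_log h).comp t (hasDerivAt_affine a b t)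

theorem hasDerivAt_log_affine {a b t : ℝ} (h : a + b * t ≠ 0) :
    HasDerivAt (fun t => b * (log (a + b * t) + 1)) (b ^ 2 / (a + b * t)) t := by
  refine ((((hasDerivAt_affine a b t).log h).add_const 1).const_mul b).congr_deriv ?_
  ring

variable {ι : Type*} (s : Finset ι) (w a b : ι → ℝ)

theorem hasDerivAt_sum_mul_log_affine {t : ℝ} (ht : ∀ i ∈ s, a i + b i * t ≠ 0) :
    HasDerivAt (fun t => ∑ i ∈ s, w i * ((a i + b i * t) * log (a i + b i * t)))
      (∑ i ∈ s, w i * (b i * (log (a i + b i * t) + 1))) t :=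
  HasDerivAt.fun_sum fun i hi => (hasDerivAt_mul_log_affine (ht i hi)).const_mul (w i)

theorem hasDerivAt_sum_log_affine {t : ℝ} (ht : ∀ i ∈ s, a i + b i * t ≠ 0) :
    HasDerivAt (fun t => ∑ i ∈ s, w i * (b i * (log (a i + b i * t) + 1)))
      (∑ i ∈ s, w i * (b i ^ 2 / (a i + b i * t))) t :=
  HasDerivAt.fun_sum fun i hi => (hasDerivAt_log_affine (ht i hi)).const_mul (w i)

theorem deriv_deriv_const_add_sum_mul_log_affine (c : ℝ) {t : ℝ}
    (ht : ∀ i ∈ s, 0 < a i + b i * t) :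
    deriv (deriv fun t => c + ∑ i ∈ s, w i * ((a i + b i * t) * log (a i + b i * t))) t =
      ∑ i ∈ s, w i * (b i ^ 2 / (a i + b i * t)) := by
  have hpos : ∀ᶠ y in 𝓝 t, ∀ i ∈ s, 0 < a i + b i * y :=
    (eventually_all_finset s).2 fun i hi =>
      continuousAt_const.eventually_lt (by fun_prop) (ht i hi)
  refine deriv_deriv_eq_of_eventually_hasDerivAt (hpos.mono fun y hy =>
    (hasDerivAt_sum_mul_log_affine s w a b fun i hi => (hy i hi).ne').const_add c) ?_
  exact hasDerivAt_sum_log_affine s w a b fun i hi => (ht i hi).ne'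

end MulLogAffine

theorem neg_one_div_add_div_add_div_sub_div_sub_div_neg {k e ρ A B C X : ℝ} (hk : 0 < k)
    (hρ : 0 < ρ) (hA : 0 < A) (hC : 0 < C) (hCB : C < B) (hX : 0 < X) (hXA : X < e * A) :
    -1 / ρ + (k - 1) / A + 2 * (k - 1) / B - 2 * k / C - k * e / X < 0 := by
  have he : 0 < e := pos_of_mul_pos_left (hX.trans hXA) hA.le
  have hρ' : -1 / ρ < 0 := div_neg_of_neg_of_pos (by norm_num) hρ
  have hA' : (k - 1) / A < k * e / X :=
    calc (k - 1) / A < k / A := by gcongr; linarith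
      _ = k * e / (e * A) := by field_simp
      _ < k * e / X := by gcongr
  have hB' : 2 * (k - 1) / B < 2 * k / C :=
    calc 2 * (k - 1) / B < 2 * k / B := by gcongr <;> linarith
      _ < 2 * k / C := by gcongr
  linarith

theorem admissible_bounds {d l : ℕ} {β ρ θ : ℝ} (hd : 2 ≤ d) (hl : 0 < l)
    (hβ : β ∈ Set.Ioo (0 : ℝ) (1 / d)) (hρ : ρ ∈ Set.Ioo (0 : ℝ) β)
    (hθ : θ ∈ Set.Ioo (max 0 (2 * l * β - l * ρ - l / d)) ((l : ℝ) * β - l * ρ)) :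
    0 < θ / l ∧ θ / l < β - ρ ∧ 0 < 1 - 2 * β + ρ ∧ 0 < 1 - 2 * β * d + ρ * d + θ * d / l ∧
      1 - 2 * β * d + ρ * d + θ * d / l < d * (1 - 2 * β + ρ) := by
  obtain ⟨hβ₀, hβd⟩ := hβ
  obtain ⟨hρ₀, hρβ⟩ := hρ
  obtain ⟨hθ₀, hθlo⟩ := max_lt_iff.1 hθ.1
  have hl₀ : (0 : ℝ) < l := Nat.cast_pos.2 hl
  have hd₂ : (2 : ℝ) ≤ d := by exact_mod_cast hd
  have hd₀ : (0 : ℝ) < d := by linarith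
  have hβd' : β * d < 1 := (lt_div_iff₀ hd₀).1 hβd
  have huβ : θ / l < β - ρ := (div_lt_iff₀ hl₀).2 (by linarith [hθ.2])
  have hul : 2 * β - ρ - 1 / d < θ / l := (lt_div_iff₀ hl₀).2 <| by
    linarith [show (2 * β - ρ - 1 / d) * l = 2 * l * β - l * ρ - l / d by ring]
  have hud : 2 * β * d - ρ * d - 1 < θ / l * d := by
    have := mul_lt_mul_of_pos_right hul hd₀
    linarith [show (2 * β - ρ - 1 / d) * d = 2 * β * d - ρ * d - 1 by field_simp]
  have huβd : θ / l * d < β * d := by nlinarith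
  rw [show θ * d / l = θ / l * d by ring]
  refine ⟨div_pos hθ₀ hl₀, huβ, ?_, ?_, ?_⟩ <;> nlinarith

/-- On the admissible region, the second partial derivative of `Ψ` in `ρ` equals the
explicit expression, which is strictly negative. -/
theorem Psi_rho_second_deriv_neg (d l : ℕ) (hd : 2 ≤ d) (hl : 2 ≤ l)
    (β ρ θ : ℝ) (hβ : β ∈ Set.Ioo (0 : ℝ) (1 / d)) (hρ : ρ ∈ Set.Ioo (0 : ℝ) β)
    (hθ : θ ∈ Set.Ioo (max 0 (2 * l * β - l * ρ - l / d)) ((l : ℝ) * β - l * ρ))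
    (Ψ : ℝ → ℝ → ℝ)
    (hΨ : Ψ = fun ρ θ => -ρ * Real.log ρ - θ * Real.log (θ / l)
      + ((l : ℝ) - 1) * (1 - 2 * β + ρ) * Real.log (1 - 2 * β + ρ)
      + θ * Real.log ((d : ℝ) - 1)
      + 2 * ((l : ℝ) - 1) * (β - ρ) * Real.log (β - ρ)
      - 2 * l * (β - ρ - θ / l) * Real.log (β - ρ - θ / l)
      - ((l : ℝ) / d) * (1 - 2 * β * d + ρ * d + (θ / l) * d)
          * Real.log (1 - 2 * β * d + ρ * d + (θ / l) * d)) :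
    deriv (deriv (fun ρ' => Ψ ρ' θ)) ρ =
      -1 / ρ + ((l : ℝ) - 1) / (1 - 2 * β + ρ) + 2 * ((l : ℝ) - 1) / (β - ρ)
        - 2 * l / (β - ρ - θ / l) - (l : ℝ) * d / (1 - 2 * β * d + ρ * d + θ * d / l) ∧
    deriv (deriv (fun ρ' => Ψ ρ' θ)) ρ < 0 := by
  obtain ⟨hu₀, huβ, hA, hX, hXA⟩ := admissible_bounds hd (by omega) hβ hρ hθ
  have hC : 0 < β - ρ - θ / l := by linarith
  set w : Fin 5 → ℝ := ![-1, (l : ℝ) - 1, 2 * ((l : ℝ) - 1), -2 * l, -(l / d : ℝ)] with hw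
  set a : Fin 5 → ℝ := ![0, 1 - 2 * β, β, β - θ / l, 1 - 2 * β * d + θ / l * d] with ha
  set b : Fin 5 → ℝ := ![1, 1, -1, -1, (d : ℝ)] with hb
  have hΨ_sum : (fun ρ' => Ψ ρ' θ) = fun t => (θ * log ((d : ℝ) - 1) - θ * log (θ / l)) +
      ∑ i, w i * ((a i + b i * t) * log (a i + b i * t)) := by
    subst hΨ
    funext t
    simp only [hw, ha, hb, Fin.sum_univ_five, Matrix.cons_val, Matrix.cons_val_zero,
      Matrix.cons_val_one, zero_add, one_mul, neg_mul]
    ring_nf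
  have hΨρρ : deriv (deriv fun ρ' => Ψ ρ' θ) ρ =
      -1 / ρ + ((l : ℝ) - 1) / (1 - 2 * β + ρ) + 2 * ((l : ℝ) - 1) / (β - ρ)
        - 2 * l / (β - ρ - θ / l) - (l : ℝ) * d / (1 - 2 * β * d + ρ * d + θ * d / l) := by
    rw [hΨ_sum, deriv_deriv_const_add_sum_mul_log_affine]
    · simp only [hw, ha, hb, Fin.sum_univ_five, Matrix.cons_val, Matrix.cons_val_zero,
        Matrix.cons_val_one, zero_add, one_mul, neg_mul]
      field_simp
      ring
    · intro i _
      fin_cases i <;>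
        simp only [ha, hb, Fin.zero_eta, Fin.mk_one, Fin.reduceFinMk, Matrix.cons_val] <;>
        linarith [hρ.1, hρ.2, show θ * d / l = θ / l * d by ring]
  exact ⟨hΨρρ, hΨρρ ▸ neg_one_div_add_div_add_div_sub_div_sub_div_neg (by positivity) hρ.1 hA hC
    (by linarith) hX hXA⟩
end

section
/- Let d ≥ 2, l ≥ 2 and β ∈ (0, 1/d). The determinant of the Hessian of Ψ at the point (ρ,θ) = (β², l(d-1)β²) equals (β²d - 2β + β²l - β²dl + 1) / (l·β⁴·(βd-1)²·(β-1)²·(d-1)). -/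
/-!
Each term of `Ψ` is either linear or of the form `c·u·log u` with `u` affine in `(ρ, θ)`, so
every second partial derivative is a sum of terms `c·∂u·∂'u / u`. At `(β², l(d-1)β²)` the
arguments of the logarithms factor as `β²`, `(1-β)²`, `β(1-β)`, `β(1-βd)` and `(1-βd)²`, after
which the determinant is an identity of rational functions.
-/

open Real Filter Topology

theorem hasDerivAt_const_mul_mul_log {f : ℝ → ℝ} {f' x : ℝ} (c : ℝ) (hf : HasDerivAt f f' x)
    (hx : f x ≠ 0) :
    HasDerivAt (fun y => c * f y * log (f y)) (c * f' * (log (f x) + 1)) x := by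
  refine ((hf.const_mul c).mul (hf.log hx)).congr_deriv ?_
  field_simp

section SecondMomentExponent

variable (d l : ℕ) (β : ℝ)

noncomputable def psi (ρ θ : ℝ) : ℝ :=
  -ρ * log ρ - θ * log (θ / l)
    + ((l : ℝ) - 1) * (1 - 2 * β + ρ) * log (1 - 2 * β + ρ)
    + θ * log ((d : ℝ) - 1)
    + 2 * ((l : ℝ) - 1) * (β - ρ) * log (β - ρ)
    - 2 * l * (β - ρ - θ / l) * log (β - ρ - θ / l)
    - ((l : ℝ) / d) * (1 - 2 * β * d + ρ * d + (θ / l) * d)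
        * log (1 - 2 * β * d + ρ * d + (θ / l) * d)

-- The constants `+1` from `(u log u)' = u' (log u + 1)` cancel in both first partials.
noncomputable def psiRho (ρ θ : ℝ) : ℝ :=
  -log ρ + ((l : ℝ) - 1) * log (1 - 2 * β + ρ) - 2 * ((l : ℝ) - 1) * log (β - ρ)
    + 2 * l * log (β - ρ - θ / l) - l * log (1 - 2 * β * d + ρ * d + (θ / l) * d)

noncomputable def psiTheta (ρ θ : ℝ) : ℝ :=
  -log (θ / l) + log ((d : ℝ) - 1) + 2 * log (β - ρ - θ / l)
    - log (1 - 2 * β * d + ρ * d + (θ / l) * d)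

variable {d l β} {ρ θ : ℝ}

theorem hasDerivAt_psi_rho (hd : (d : ℝ) ≠ 0) (h₁ : ρ ≠ 0) (h₂ : 1 - 2 * β + ρ ≠ 0)
    (h₃ : β - ρ ≠ 0) (h₄ : β - ρ - θ / l ≠ 0) (h₅ : 1 - 2 * β * d + ρ * d + (θ / l) * d ≠ 0) :
    HasDerivAt (fun ρ => psi d l β ρ θ) (psiRho d l β ρ θ) ρ := by
  have hid := hasDerivAt_id' ρ
  have t₁ := hasDerivAt_negMulLog h₁
  have t₂ := hasDerivAt_const_mul_mul_log ((l : ℝ) - 1) (hid.const_add (1 - 2 * β)) h₂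
  have t₃ := hasDerivAt_const_mul_mul_log (2 * ((l : ℝ) - 1)) (hid.const_sub β) h₃
  have t₄ := hasDerivAt_const_mul_mul_log (2 * l) ((hid.const_sub β).sub_const (θ / l)) h₄
  have t₅ := hasDerivAt_const_mul_mul_log ((l : ℝ) / d)
    (((hid.mul_const (d : ℝ)).const_add (1 - 2 * β * d)).add_const ((θ / l) * d)) h₅
  refine ((((((t₁.sub_const _).add t₂).add_const _).add t₃).sub t₄).sub t₅).congr_deriv ?_
  unfold psiRho
  field_simp
  ring

theorem hasDerivAt_psi_theta (hd : (d : ℝ) ≠ 0) (hl : (l : ℝ) ≠ 0) (h₁ : θ ≠ 0)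
    (h₄ : β - ρ - θ / l ≠ 0) (h₅ : 1 - 2 * β * d + ρ * d + (θ / l) * d ≠ 0) :
    HasDerivAt (fun θ => psi d l β ρ θ) (psiTheta d l β ρ θ) θ := by
  have hid := hasDerivAt_id' θ
  have t₁ := hid.mul ((hid.div_const (l : ℝ)).log (div_ne_zero h₁ hl))
  have t₂ := hid.mul_const (log ((d : ℝ) - 1))
  have t₃ := hasDerivAt_const_mul_mul_log (2 * l) ((hid.div_const (l : ℝ)).const_sub (β - ρ)) h₄
  have t₄ := hasDerivAt_const_mul_mul_log ((l : ℝ) / d)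
    (((hid.div_const (l : ℝ)).mul_const (d : ℝ)).const_add (1 - 2 * β * d + ρ * d)) h₅
  refine (((((((hasDerivAt_const θ (-ρ * log ρ)).sub t₁).add_const _).add t₂).add_const _).sub
    t₃).sub t₄).congr_deriv ?_
  unfold psiTheta
  field_simp
  ring

theorem deriv_deriv_psi_rho (hd : (d : ℝ) ≠ 0) (h₁ : ρ ≠ 0) (h₂ : 1 - 2 * β + ρ ≠ 0)
    (h₃ : β - ρ ≠ 0) (h₄ : β - ρ - θ / l ≠ 0) (h₅ : 1 - 2 * β * d + ρ * d + (θ / l) * d ≠ 0) :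
    deriv (deriv fun ρ => psi d l β ρ θ) ρ
      = -1 / ρ + ((l : ℝ) - 1) / (1 - 2 * β + ρ) + 2 * ((l : ℝ) - 1) / (β - ρ)
        - 2 * l / (β - ρ - θ / l) - l * d / (1 - 2 * β * d + ρ * d + (θ / l) * d) := by
  have hid := hasDerivAt_id' ρ
  have v₂ := hid.const_add (1 - 2 * β)
  have v₃ := hid.const_sub β
  have v₄ := v₃.sub_const (θ / l)
  have v₅ := ((hid.mul_const (d : ℝ)).const_add (1 - 2 * β * d)).add_const ((θ / l) * d)
  have hev : deriv (fun ρ => psi d l β ρ θ) =ᶠ[𝓝 ρ] fun ρ => psiRho d l β ρ θ := by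
    filter_upwards [hid.continuousAt.eventually_ne h₁, v₂.continuousAt.eventually_ne h₂,
      v₃.continuousAt.eventually_ne h₃, v₄.continuousAt.eventually_ne h₄,
      v₅.continuousAt.eventually_ne h₅] with x hx₁ hx₂ hx₃ hx₄ hx₅
    exact (hasDerivAt_psi_rho hd hx₁ hx₂ hx₃ hx₄ hx₅).deriv
  rw [hev.deriv_eq]
  refine ((((((hid.log h₁).neg.add ((v₂.log h₂).const_mul _)).sub ((v₃.log h₃).const_mul _)).add
    ((v₄.log h₄).const_mul _)).sub ((v₅.log h₅).const_mul _)).congr_deriv ?_).deriv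
  field_simp
  ring

theorem deriv_deriv_psi_theta (hd : (d : ℝ) ≠ 0) (hl : (l : ℝ) ≠ 0) (h₁ : θ ≠ 0)
    (h₄ : β - ρ - θ / l ≠ 0) (h₅ : 1 - 2 * β * d + ρ * d + (θ / l) * d ≠ 0) :
    deriv (deriv fun θ => psi d l β ρ θ) θ
      = -1 / θ - (2 / l) / (β - ρ - θ / l) - (d / l) / (1 - 2 * β * d + ρ * d + (θ / l) * d) := by
  have hid := hasDerivAt_id' θ
  have v₁ := hid.div_const (l : ℝ)
  have v₄ := v₁.const_sub (β - ρ)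
  have v₅ := (v₁.mul_const (d : ℝ)).const_add (1 - 2 * β * d + ρ * d)
  have hev : deriv (fun θ => psi d l β ρ θ) =ᶠ[𝓝 θ] fun θ => psiTheta d l β ρ θ := by
    filter_upwards [hid.continuousAt.eventually_ne h₁, v₄.continuousAt.eventually_ne h₄,
      v₅.continuousAt.eventually_ne h₅] with x hx₁ hx₄ hx₅
    exact (hasDerivAt_psi_theta hd hl hx₁ hx₄ hx₅).deriv
  rw [hev.deriv_eq]
  refine (((((v₁.log (div_ne_zero h₁ hl)).neg.add_const _).add ((v₄.log h₄).const_mul _)).sub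
    (v₅.log h₅)).congr_deriv ?_).deriv
  field_simp
  ring

theorem deriv_deriv_psi_rho_theta (hd : (d : ℝ) ≠ 0) (hl : (l : ℝ) ≠ 0) (h₁ : ρ ≠ 0)
    (h₂ : 1 - 2 * β + ρ ≠ 0) (h₃ : β - ρ ≠ 0) (h₄ : β - ρ - θ / l ≠ 0)
    (h₅ : 1 - 2 * β * d + ρ * d + (θ / l) * d ≠ 0) :
    deriv (fun θ => deriv (fun ρ => psi d l β ρ θ) ρ) θ
      = -2 / (β - ρ - θ / l) - d / (1 - 2 * β * d + ρ * d + (θ / l) * d) := by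
  have hid := hasDerivAt_id' θ
  have v₁ := hid.div_const (l : ℝ)
  have v₄ := v₁.const_sub (β - ρ)
  have v₅ := (v₁.mul_const (d : ℝ)).const_add (1 - 2 * β * d + ρ * d)
  have hev : (fun θ => deriv (fun ρ => psi d l β ρ θ) ρ) =ᶠ[𝓝 θ] fun θ => psiRho d l β ρ θ := by
    filter_upwards [v₄.continuousAt.eventually_ne h₄, v₅.continuousAt.eventually_ne h₅]
      with x hx₄ hx₅
    exact (hasDerivAt_psi_rho hd h₁ h₂ h₃ hx₄ hx₅).deriv
  rw [hev.deriv_eq]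
  refine ((((hasDerivAt_const θ _).add ((v₄.log h₄).const_mul _)).sub
    ((v₅.log h₅).const_mul _)).congr_deriv ?_).deriv
  field_simp
  ring

end SecondMomentExponent

/-- The determinant of the Hessian of `Ψ` at `(β², l(d-1)β²)` equals
`(β²d - 2β + β²l - β²dl + 1) / (l β⁴ (βd-1)² (β-1)² (d-1))`. -/
theorem Psi_hessian_det (d l : ℕ) (hd : 2 ≤ d) (hl : 2 ≤ l)
    (β : ℝ) (hβ : β ∈ Set.Ioo (0 : ℝ) (1 / d))
    (Ψ : ℝ → ℝ → ℝ)
    (hΨ : Ψ = fun ρ θ => -ρ * Real.log ρ - θ * Real.log (θ / l)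
      + ((l : ℝ) - 1) * (1 - 2 * β + ρ) * Real.log (1 - 2 * β + ρ)
      + θ * Real.log ((d : ℝ) - 1)
      + 2 * ((l : ℝ) - 1) * (β - ρ) * Real.log (β - ρ)
      - 2 * l * (β - ρ - θ / l) * Real.log (β - ρ - θ / l)
      - ((l : ℝ) / d) * (1 - 2 * β * d + ρ * d + (θ / l) * d)
          * Real.log (1 - 2 * β * d + ρ * d + (θ / l) * d)) :
    (deriv (deriv (fun ρ => Ψ ρ ((l : ℝ) * ((d : ℝ) - 1) * β ^ 2))) (β ^ 2))
        * (deriv (deriv (fun θ => Ψ (β ^ 2) θ)) ((l : ℝ) * ((d : ℝ) - 1) * β ^ 2))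
      - (deriv (fun θ => deriv (fun ρ => Ψ ρ θ) (β ^ 2)) ((l : ℝ) * ((d : ℝ) - 1) * β ^ 2)) ^ 2
      = (β ^ 2 * d - 2 * β + β ^ 2 * l - β ^ 2 * d * l + 1) /
          ((l : ℝ) * β ^ 4 * (β * d - 1) ^ 2 * (β - 1) ^ 2 * ((d : ℝ) - 1)) := by
  obtain ⟨hβ₀, hβd⟩ := hβ
  have hd₁ : (0 : ℝ) < (d : ℝ) - 1 := by
    have : (2 : ℝ) ≤ d := by exact_mod_cast hd
    linarith
  have hl₀ : (l : ℝ) ≠ 0 := by positivity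
  have hβd' : 0 < 1 - β * d := by
    rw [lt_div_iff₀ (by linarith)] at hβd
    linarith
  have hβ₁ : 0 < 1 - β := by nlinarith
  have hθ : (l : ℝ) * ((d : ℝ) - 1) * β ^ 2 / l = ((d : ℝ) - 1) * β ^ 2 := by field_simp
  have e₂ : 1 - 2 * β + β ^ 2 = (1 - β) ^ 2 := by ring
  have e₃ : β - β ^ 2 = β * (1 - β) := by ring
  have e₄ : β - β ^ 2 - ((d : ℝ) - 1) * β ^ 2 = β * (1 - β * d) := by ring
  have e₅ : 1 - 2 * β * d + β ^ 2 * d + ((d : ℝ) - 1) * β ^ 2 * d = (1 - β * d) ^ 2 := by ring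
  have h₂ : 1 - 2 * β + β ^ 2 ≠ 0 := by nlinarith
  have h₃ : β - β ^ 2 ≠ 0 := by nlinarith
  have h₄ : β - β ^ 2 - (l : ℝ) * ((d : ℝ) - 1) * β ^ 2 / l ≠ 0 := by rw [hθ]; nlinarith
  have h₅ : 1 - 2 * β * d + β ^ 2 * d + (l : ℝ) * ((d : ℝ) - 1) * β ^ 2 / l * d ≠ 0 := by
    rw [hθ]; nlinarith
  obtain rfl : Ψ = psi d l β := hΨ
  rw [deriv_deriv_psi_rho (by positivity) (by positivity) h₂ h₃ h₄ h₅,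
    deriv_deriv_psi_theta (by positivity) hl₀ (by positivity) h₄ h₅,
    deriv_deriv_psi_rho_theta (by positivity) hl₀ (by positivity) h₂ h₃ h₄ h₅,
    hθ, e₄, e₅, e₂, e₃]
  have hβd'' : β * d - 1 ≠ 0 := by linarith
  have hβ₁' : β - 1 ≠ 0 := by linarith
  field_simp
  ring
end

section
/- Let d ≥ 2, l ≥ 2 and β ∈ (0, 1/d). The quantity g(β) = β²(d + l - dl) - 2β + 1 is strictly positive for all β ∈ (0, 1/d) if and only if l ≤ d (in particular, when l ≤ d the Hessian of Ψ at (β², l(d-1)β²) is negative definite). -/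
/-- `g(β) = β²(d + l - dl) - 2β + 1 > 0` for all `β ∈ (0,1/d)` if and only if `l ≤ d`. -/
theorem g_pos_iff_l_le_d (d l : ℕ) (hd : 2 ≤ d) (hl : 2 ≤ l) :
    (∀ β ∈ Set.Ioo (0 : ℝ) (1 / d),
        0 < β ^ 2 * ((d : ℝ) + l - d * l) - 2 * β + 1) ↔ l ≤ d := by
  have hd' : (2 : ℝ) ≤ d := by exact_mod_cast hd
  have hl' : (2 : ℝ) ≤ l := by exact_mod_cast hl
  have hd0 : (0 : ℝ) < d := by linarith
  have hl0 : (0 : ℝ) < l := by linarith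
  constructor
  · intro h
    by_contra hld
    push_neg at hld
    have hld' : (d : ℝ) + 1 ≤ l := by exact_mod_cast hld
    set β : ℝ := (2 * l - 1) / (2 * d * l) with hβ
    have hden : (0 : ℝ) < 2 * d * l := by positivity
    have hβ0 : 0 < β := by
      apply div_pos _ hden; linarith
    have hβ1 : β < 1 / d := by
      rw [hβ, div_lt_div_iff₀ hden hd0]
      nlinarith
    have this1 := h β ⟨hβ0, hβ1⟩
    have ht : β * (2 * d * l) = 2 * l - 1 := by
      rw [hβ]; field_simp
    have h3 : (β * (2 * d * l)) ^ 2 = (2 * (l:ℝ) - 1) ^ 2 := by rw [ht]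
    have h2 : ((2 * (l:ℝ) - 1)) ^ 2 * ((d : ℝ) + l - d * l)
        - 2 * (2 * l - 1) * (2 * d * l) + (2 * d * l) ^ 2 ≤ 0 := by
      have e1 : (0:ℝ) ≤ 4 * l ^ 2 * ((d:ℝ) - 1) * (l - (d + 1)) := by
        apply mul_nonneg (mul_nonneg (by positivity) (by linarith)) (by linarith)
      nlinarith [e1, mul_nonneg (by linarith : (0:ℝ) ≤ (d:ℝ) - 2) (by linarith : (0:ℝ) ≤ (l:ℝ) - 2)]
    have hsq : (0:ℝ) < (2 * (d:ℝ) * l) ^ 2 := by positivity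
    nlinarith [mul_pos this1 hsq, ht, h3, h2]
  · intro hld β hβ
    obtain ⟨hβ0, hβ1⟩ := hβ
    have hld' : (l : ℝ) ≤ d := by exact_mod_cast hld
    have hdb : d * β < 1 := by
      rw [lt_div_iff₀ hd0] at hβ1; linarith
    have h1 : 0 < (1 - (d:ℝ) * β) * ((d - 2) * β + 1) := by
      apply mul_pos (by linarith)
      nlinarith
    nlinarith [mul_nonneg (mul_nonneg (sub_nonneg.2 hld') (by linarith : (0:ℝ) ≤ (d:ℝ) - 1)) (sq_nonneg β)]
end

section
/- Let l = 2, d ≥ 2, β ∈ (0, 1/d), ρ ∈ (0, β), and θ ∈ (max{0, 4β - 2ρ - 2/d}, 2β - 2ρ). Then the Hessian matrix of Ψ (with l = 2) at (ρ,θ) is negative definite. -/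
/-!
Write `r = β - ρ`, `s = r - θ/2` and `u = -B = 2/s + d/t` with `t = 1 - 2βd + ρd + θd/2`.
On the region `s, t > 0`, hence `us = 2 + ds/t > 1`, and `1 - 2β + ρ > ρ` (as `2β < 1`) gives
`A < 2/r < 2u`, i.e. `A + 2B < 0`. The determinant of the Hessian is `(2u - A(1 + θu/2))/θ`,
which is positive because `A(1 + θu/2) < (2/r)(1 + θu/2) ≤ 2u`, the last step being `us ≥ 1`.
-/

open Matrix

theorem Matrix.posDef_of_fin_two {a b c : ℝ} (ha : 0 < a) (hdet : 0 < a * c - b ^ 2) :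
    (Matrix.of ![![a, b], ![b, c]]).PosDef := by
  rw [posDef_iff_dotProduct_mulVec]
  refine ⟨?_, fun x hx => ?_⟩
  · ext i j
    fin_cases i <;> fin_cases j <;> rfl
  · have hform : a * (star x ⬝ᵥ (Matrix.of ![![a, b], ![b, c]] *ᵥ x))
        = (a * x 0 + b * x 1) ^ 2 + (a * c - b ^ 2) * x 1 ^ 2 := by
      simp only [dotProduct, Pi.star_apply, star_trivial, mulVec, of_apply, cons_val',
        cons_val_fin_one, Fin.sum_univ_two, cons_val_zero, cons_val_one]
      ring
    refine pos_of_mul_pos_right (hform ▸ ?_) ha.le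
    by_cases h1 : x 1 = 0
    · have h0 : x 0 ≠ 0 := fun h0 => hx (funext fun i => by fin_cases i <;> simp [h0, h1])
      simpa [h1] using sq_pos_of_ne_zero (mul_ne_zero ha.ne' h0)
    · exact add_pos_of_nonneg_of_pos (sq_nonneg _) (mul_pos hdet (sq_pos_of_ne_zero h1))

theorem Matrix.neg_posDef_of_fin_two {a b c : ℝ} (ha : a < 0) (hdet : 0 < a * c - b ^ 2) :
    (-(Matrix.of ![![a, b], ![b, c]])).PosDef := by
  have hneg : -(Matrix.of ![![a, b], ![b, c]]) = Matrix.of ![![-a, -b], ![-b, -c]] := by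
    ext i j
    fin_cases i <;> fin_cases j <;> rfl
  rw [hneg]
  exact posDef_of_fin_two (neg_pos.mpr ha) (by linarith)

theorem hessian_neg_posDef_of_bounds {A B r θ : ℝ} (hθ : 0 < θ) (hs : 0 < r - θ / 2)
    (hA : A < 2 / r) (hB : 1 < -B * (r - θ / 2)) :
    (-(Matrix.of ![![A + 2 * B, B], ![B, -1 / θ + B / 2]])).PosDef := by
  set u := -B with hu
  have hr : 0 < r := by linarith
  have hu0 : 0 < u := by nlinarith
  have h2r : 2 / r < 2 * u := by rw [div_lt_iff₀ hr]; nlinarith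
  refine neg_posDef_of_fin_two (by linarith) ?_
  have hdet : (A + 2 * B) * (-1 / θ + B / 2) - B ^ 2 = (2 * u - A * (1 + θ * u / 2)) / θ := by
    rw [hu]; field_simp; ring
  have hkey : A * (1 + θ * u / 2) < 2 * u := by
    have h1 : 0 < 1 + θ * u / 2 := by positivity
    calc A * (1 + θ * u / 2) < 2 / r * (1 + θ * u / 2) := by gcongr
      _ ≤ 2 * u := by
        rw [div_mul_eq_mul_div, div_le_iff₀ hr]; nlinarith
  rw [hdet]
  exact div_pos (by linarith) hθ

/-- For `l = 2`, the Hessian matrix of `Ψ` is negative definite on the admissible region: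
with `A = -1/ρ + 1/(1-2β+ρ) + 2/(β-ρ)`, `B = -2/(β-ρ-θ/2) - d/(1-2βd+ρd+θd/2)`,
`C = -1/θ`, the matrix `![![A+2B, B], ![B, C+B/2]]` is negative definite. -/
theorem hessian_negdef_l_eq_two (d : ℕ) (hd : 2 ≤ d)
    (β ρ θ : ℝ) (hβ : β ∈ Set.Ioo (0 : ℝ) (1 / d)) (hρ : ρ ∈ Set.Ioo (0 : ℝ) β)
    (hθ : θ ∈ Set.Ioo (max 0 (4 * β - 2 * ρ - 2 / d)) (2 * β - 2 * ρ))
    (A B C : ℝ)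
    (hA : A = -1 / ρ + 1 / (1 - 2 * β + ρ) + 2 / (β - ρ))
    (hB : B = -2 / (β - ρ - θ / 2) - (d : ℝ) / (1 - 2 * β * d + ρ * d + θ * d / 2))
    (hC : C = -1 / θ) :
    (-(Matrix.of ![![A + 2 * B, B], ![B, C + B / 2]])).PosDef := by
  obtain ⟨hβ0, hβd⟩ := hβ
  obtain ⟨hρ0, hρβ⟩ := hρ
  obtain ⟨hθl, hθu⟩ := hθ
  obtain ⟨hθ0, hθd⟩ := max_lt_iff.mp hθl
  have hd2 : (2 : ℝ) ≤ d := by exact_mod_cast hd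
  have hd0 : (0 : ℝ) < d := by linarith
  have hβd_lt : β * d < 1 := (lt_div_iff₀ hd0).mp hβd
  have hs : 0 < β - ρ - θ / 2 := by linarith
  have ht : 0 < 1 - 2 * β * d + ρ * d + θ * d / 2 := by
    have := (lt_div_iff₀ hd0).mp (by linarith : 4 * β - 2 * ρ - θ < 2 / d)
    linarith
  set s := β - ρ - θ / 2
  set t := 1 - 2 * β * d + ρ * d + θ * d / 2
  subst hA hB hC
  refine hessian_neg_posDef_of_bounds hθ0 hs ?_ ?_
  · have hq : 1 / (1 - 2 * β + ρ) < 1 / ρ := one_div_lt_one_div_of_lt hρ0 (by nlinarith)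
    rw [neg_div]
    linarith [hq]
  · have hsB : -(-2 / s - d / t) * s = 2 + d * s / t := by
      field_simp
      ring
    rw [hsB]
    linarith [show 0 ≤ d * s / t by positivity]
end

section
/- For every integer k ≥ 1 and real α > 0, the identity ∑_{t=0}^{⌊k/2⌋} (1/(k-t))·C(k-t, t)·α^t = ((-1)^k / k) · (β^k + (β-1)^k) / (1-2β)^k holds, where β ∈ (0, 1/2) is such that α = β(1-β)/(1-2β)². -/
/-!
Put `x = -β/(1-2β)` and `y = (1-β)/(1-2β)`, so that `x + y = 1` and `xy = -α`. The power sums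
`x^k + y^k` then obey the Fibonacci recurrence `s (n+2) = s (n+1) + α s n`, as do the Fibonacci
polynomials `F n = ∑_{m+t=n} C(m,t) α^t`; comparing initial values gives
`x^(n+2) + y^(n+2) = F (n+2) + α F n`. Finally `k/m · C(m,t) = C(m,t) + C(m-1,t-1)` for
`m + t = k`, so `F k + α F (k-2)` is `k` times the sum of the theorem, whose right-hand side is
`(x^k + y^k)/k`.
-/

open Finset

section FibPoly

variable {R : Type*} [CommSemiring R]

def fibPoly (a : R) (n : ℕ) : R := ∑ p ∈ antidiagonal n, (p.1.choose p.2 : R) * a ^ p.2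

theorem fibPoly_zero (a : R) : fibPoly a 0 = 1 := by simp [fibPoly]

theorem fibPoly_one (a : R) : fibPoly a 1 = 1 := by simp [fibPoly, Nat.antidiagonal_succ]

theorem fibPoly_add_two (a : R) (n : ℕ) :
    fibPoly a (n + 2) = fibPoly a (n + 1) + a * fibPoly a n := by
  simp only [fibPoly, Nat.antidiagonal_succ_succ', Nat.antidiagonal_succ', sum_cons, sum_map,
    mul_sum]
  rw [add_assoc, ← sum_add_distrib]
  simp only [Nat.choose_zero_succ, Nat.choose_zero_right, Nat.cast_zero, zero_mul, zero_add]
  congr 1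
  refine sum_congr rfl fun p _ => ?_
  simp only [Function.Embedding.coe_prodMap, Function.Embedding.coeFn_mk, Prod.map_fst,
    Prod.map_snd, Function.Embedding.refl_apply, Nat.succ_eq_add_one, Nat.choose_succ_succ]
  push_cast
  ring

end FibPoly

theorem pow_add_pow_eq_fibPoly {R : Type*} [CommRing R] {a x y : R} (hsum : x + y = 1)
    (hprod : x * y = -a) (n : ℕ) :
    x ^ (n + 2) + y ^ (n + 2) = fibPoly a (n + 2) + a * fibPoly a n := by
  have hx : x ^ 2 = x + a := by linear_combination x * hsum - hprod
  have hy : y ^ 2 = y + a := by linear_combination y * hsum - hprod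
  induction n using Nat.twoStepInduction with
  | zero =>
    rw [fibPoly_add_two, fibPoly_zero, fibPoly_one]
    linear_combination hx + hy + hsum
  | one =>
    rw [fibPoly_add_two, fibPoly_add_two a 0, fibPoly_zero, fibPoly_one]
    linear_combination (x + 1) * hx + (y + 1) * hy + (1 + a) * hsum
  | more n ih₀ ih₁ =>
    rw [fibPoly_add_two a (n + 2)]
    linear_combination ih₁ + a * ih₀ + x ^ (n + 2) * hx + y ^ (n + 2) * hy
      - a * fibPoly_add_two a n

section Lucas

variable {K : Type*} [Field K] [CharZero K]

theorem sum_antidiagonal_div_mul_choose (a : K) (n : ℕ) :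
    ∑ p ∈ antidiagonal (n + 2), (p.2 : K) / p.1 * p.1.choose p.2 * a ^ p.2
      = a * fibPoly a n := by
  rw [Nat.antidiagonal_succ_succ', sum_cons, sum_cons, sum_map, fibPoly, mul_sum]
  simp only [Nat.cast_zero, div_zero, zero_div, zero_mul, zero_add]
  refine sum_congr rfl fun p _ => ?_
  have h := Nat.add_one_mul_choose_eq p.1 p.2
  simp only [Function.Embedding.coe_prodMap, Function.Embedding.coeFn_mk, Prod.map_fst,
    Prod.map_snd, Nat.succ_eq_add_one]
  rw [div_mul_eq_mul_div, div_mul_eq_mul_div,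
    div_eq_iff (Nat.cast_ne_zero.mpr p.1.succ_ne_zero), mul_comm ((p.2 + 1 : ℕ) : K),
    ← Nat.cast_mul, ← h]
  push_cast
  ring

theorem natCast_mul_sum_choose_div (a : K) (n : ℕ) :
    ((n + 2 : ℕ) : K) * ∑ p ∈ antidiagonal (n + 2), 1 / (p.1 : K) * p.1.choose p.2 * a ^ p.2
      = fibPoly a (n + 2) + a * fibPoly a n := by
  rw [← sum_antidiagonal_div_mul_choose, fibPoly, ← sum_add_distrib, mul_sum]
  refine sum_congr rfl fun p hp => ?_
  rw [HasAntidiagonal.mem_antidiagonal] at hp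
  rcases Nat.eq_zero_or_pos p.1 with h0 | hpos
  · have hc : p.1.choose p.2 = 0 := Nat.choose_eq_zero_of_lt (by omega)
    simp [hc]
  · have hm : (p.1 : K) ≠ 0 := Nat.cast_ne_zero.mpr hpos.ne'
    rw [← hp]
    field_simp
    push_cast
    ring

theorem pow_add_pow_eq_natCast_mul_sum_choose_div {a x y : K} (hsum : x + y = 1)
    (hprod : x * y = -a) {k : ℕ} (hk : 1 ≤ k) :
    x ^ k + y ^ k = k * ∑ p ∈ antidiagonal k, 1 / (p.1 : K) * p.1.choose p.2 * a ^ p.2 := by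
  obtain rfl | ⟨n, rfl⟩ : k = 1 ∨ ∃ n, k = n + 2 := by
    rcases k with _ | _ | n
    exacts [absurd hk (by norm_num), Or.inl rfl, Or.inr ⟨n, rfl⟩]
  · simp [Nat.antidiagonal_succ, hsum]
  · rw [pow_add_pow_eq_fibPoly hsum hprod, natCast_mul_sum_choose_div]

end Lucas

theorem sum_range_div_two_succ_eq_sum_antidiagonal {M : Type*} [AddCommMonoid M]
    {f : ℕ → ℕ → M} (hf : ∀ m t, m < t → f m t = 0) (k : ℕ) :
    ∑ t ∈ range (k / 2 + 1), f (k - t) t = ∑ p ∈ antidiagonal k, f p.1 p.2 := by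
  rw [← Nat.sum_antidiagonal_swap]
  simp only [Prod.fst_swap, Prod.snd_swap]
  rw [Nat.sum_antidiagonal_eq_sum_range_succ (fun t m => f m t)]
  refine sum_subset (range_subset_range.2 (by omega)) fun t ht ht' => hf _ _ ?_
  simp only [mem_range] at ht ht'
  omega

theorem cycle_sum_identity_general (k : ℕ) (hk : 1 ≤ k) (α β : ℝ)
    (hβ : β ∈ Set.Ioo (0 : ℝ) (1 / 2))
    (hαβ : α = β * (1 - β) / (1 - 2 * β) ^ 2) :
    ∑ t ∈ Finset.range (k / 2 + 1),
        (1 / ((k - t : ℕ) : ℝ)) * (Nat.choose (k - t) t : ℝ) * α ^ t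
      = ((-1 : ℝ) ^ k / k) * ((β ^ k + (β - 1) ^ k) / (1 - 2 * β) ^ k) := by
  have hne : 1 - 2 * β ≠ 0 := by linarith [hβ.2]
  set x := -β / (1 - 2 * β)
  set y := -(β - 1) / (1 - 2 * β)
  have hsum : x + y = 1 := by rw [← add_div, div_eq_one_iff_eq hne]; ring
  have hprod : x * y = -α := by simp only [x, y, hαβ]; field_simp; ring
  calc _ = ∑ p ∈ antidiagonal k, 1 / (p.1 : ℝ) * p.1.choose p.2 * α ^ p.2 :=
        sum_range_div_two_succ_eq_sum_antidiagonal
          (f := fun m t => 1 / (m : ℝ) * m.choose t * α ^ t)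
          (fun m t h => by simp [Nat.choose_eq_zero_of_lt h]) k
    _ = (x ^ k + y ^ k) / k := by
        rw [pow_add_pow_eq_natCast_mul_sum_choose_div hsum hprod hk]
        field_simp
    _ = _ := by
        simp only [x, y, div_pow]
        rw [neg_pow β, neg_pow (β - 1)]
        ring

/-- For `k ≥ 1` and `α = β(1-β)/(1-2β)²` with `β ∈ (0,1/2)`,
`∑_{t=0}^{⌊k/2⌋} (1/(k-t))·C(k-t,t)·α^t = ((-1)^k/k)·(β^k + (β-1)^k)/(1-2β)^k`. -/
theorem cycle_sum_identity (k : ℕ) (hk : 1 ≤ k) (α β : ℝ)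
    (hβ : β ∈ Set.Ioo (0 : ℝ) (1 / 2)) (hα : 0 < α)
    (hαβ : α = β * (1 - β) / (1 - 2 * β) ^ 2) :
    ∑ t ∈ Finset.range (k / 2 + 1),
        (1 / ((k - t : ℕ) : ℝ)) * (Nat.choose (k - t) t : ℝ) * α ^ t
      = ((-1 : ℝ) ^ k / k) * ((β ^ k + (β - 1) ^ k) / (1 - 2 * β) ^ k) :=
  cycle_sum_identity_general k hk α β hβ hαβ
end

section
/- Let a > 0, λ > 0, W > 2 and y > 0. Then (e^{y/(a√λ)} / (1 + y/(a√λ))^{1 + y/(a√λ)})^λ ≤ e^{-y²/(4a²)} + e^{-|φ(1/2)|·y²/(a²W²)} + e^{-(log(1+W) - 1)·y√λ/a}, where φ(z) = z - (1+z)log(1+z). -/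
/-!
With `z = y / (a√λ)` the left side is `exp (λ φ(z))`, so it suffices to bound `φ(z)` by one of the
three exponents divided by `λ`. For `z ≤ 1/2`, `log (1+z) ≥ 2z/(z+2)` gives `φ(z) ≤ -z²/(z+2) ≤ -z²/4`;
for `1/2 < z ≤ W`, `φ` is decreasing (`φ' = -log (1+·)`), so `φ(z) ≤ φ(1/2) < 0` while `z²/W² ≤ 1`;
for `z > W`, `φ(z) ≤ z - z log (1+z) ≤ -(log (1+W) - 1) z`.
-/

open Real Set

noncomputable def poissonExponent (z : ℝ) : ℝ := z - (1 + z) * log (1 + z)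

theorem rpow_exp_div_rpow_self_eq_exp_poissonExponent {z : ℝ} (hz : -1 < z) (lam : ℝ) :
    (exp z / (1 + z) ^ (1 + z)) ^ lam = exp (lam * poissonExponent z) := by
  rw [rpow_def_of_pos (by linarith : 0 < 1 + z), ← exp_sub, ← exp_mul, poissonExponent]
  ring_nf

theorem poissonExponent_le_neg_sq_div {z : ℝ} (hz : 0 ≤ z) :
    poissonExponent z ≤ -z ^ 2 / (z + 2) := by
  have hlog : 2 * z ≤ log (1 + z) * (z + 2) :=
    (div_le_iff₀ (by linarith)).1 (le_log_one_add_of_nonneg hz)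
  rw [poissonExponent, le_div_iff₀ (by linarith)]
  nlinarith [mul_le_mul_of_nonneg_left hlog (by linarith : (0 : ℝ) ≤ 1 + z)]

theorem poissonExponent_le_neg_sq_div_four {z : ℝ} (hz : 0 ≤ z) (hz2 : z ≤ 2) :
    poissonExponent z ≤ -z ^ 2 / 4 := by
  refine (poissonExponent_le_neg_sq_div hz).trans ?_
  rw [div_le_div_iff₀ (by linarith) (by norm_num)]
  nlinarith [sq_nonneg z]

theorem poissonExponent_half_neg : poissonExponent (1 / 2) < 0 :=
  (poissonExponent_le_neg_sq_div_four (by norm_num) (by norm_num)).trans_lt (by norm_num)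

theorem hasDerivAt_poissonExponent {x : ℝ} (hx : -1 < x) :
    HasDerivAt poissonExponent (-log (1 + x)) x := by
  have hne : 1 + x ≠ 0 := by linarith
  have h1 : HasDerivAt (fun z : ℝ => 1 + z) 1 x := (hasDerivAt_id x).const_add 1
  refine ((hasDerivAt_id x).sub (h1.mul (h1.log hne))).congr_deriv ?_
  rw [mul_one_div_cancel hne]
  ring

theorem poissonExponent_antitoneOn : AntitoneOn poissonExponent (Ici 0) := by
  have hderiv : ∀ x ∈ Ici (0 : ℝ), HasDerivAt poissonExponent (-log (1 + x)) x :=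
    fun x hx => hasDerivAt_poissonExponent (by linarith [mem_Ici.1 hx])
  refine antitoneOn_of_hasDerivWithinAt_nonpos (convex_Ici 0)
    (fun x hx => (hderiv x hx).continuousAt.continuousWithinAt)
    (fun x hx => (hderiv x (interior_subset hx)).hasDerivWithinAt) (fun x hx => ?_)
  rw [interior_Ici] at hx
  exact neg_nonpos.2 (log_nonneg (by linarith [mem_Ioi.1 hx]))

theorem poissonExponent_le_neg_mul_of_le {z W : ℝ} (hz : 0 ≤ z) (hW : -1 < W) (hWz : W ≤ z) :
    poissonExponent z ≤ -(log (1 + W) - 1) * z := by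
  have hlog : log (1 + W) ≤ log (1 + z) := log_le_log (by linarith) (by linarith)
  have hlog_nonneg : 0 ≤ log (1 + z) := log_nonneg (by linarith)
  rw [poissonExponent]
  nlinarith [mul_le_mul_of_nonneg_left hlog hz]

theorem poissonExponent_le_or_le_or_le {z W : ℝ} (hz : 0 ≤ z) (hW : -1 < W) :
    poissonExponent z ≤ -z ^ 2 / 4 ∨
      poissonExponent z ≤ -|poissonExponent (1 / 2)| * z ^ 2 / W ^ 2 ∨
      poissonExponent z ≤ -(log (1 + W) - 1) * z := by
  rcases le_or_gt z (1 / 2) with hz_small | hz_half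
  · exact .inl (poissonExponent_le_neg_sq_div_four hz (by linarith))
  rcases le_or_gt z W with hz_mid | hz_large
  · refine .inr (.inl ?_)
    have hmono : poissonExponent z ≤ poissonExponent (1 / 2) :=
      poissonExponent_antitoneOn (by norm_num) hz hz_half.le
    have hratio : z ^ 2 / W ^ 2 ≤ 1 := by
      rw [div_le_one (by nlinarith)]
      nlinarith
    rw [abs_of_neg poissonExponent_half_neg, neg_neg, mul_div_assoc]
    nlinarith [poissonExponent_half_neg]
  · exact .inr (.inr (poissonExponent_le_neg_mul_of_le hz hW hz_large.le))

theorem exp_mul_le_add_add_of_le_or {lam t A B C : ℝ} (hlam : 0 ≤ lam)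
    (h : t ≤ A ∨ t ≤ B ∨ t ≤ C) :
    exp (lam * t) ≤ exp (lam * A) + exp (lam * B) + exp (lam * C) := by
  have hA := exp_pos (lam * A)
  have hB := exp_pos (lam * B)
  have hC := exp_pos (lam * C)
  rcases h with h | h | h <;>
    linarith [exp_le_exp.2 (mul_le_mul_of_nonneg_left h hlam)]

/-- For `a > 0`, `λ > 0`, `W > 2`, `y > 0`:
`(e^{y/(a√λ)} / (1+y/(a√λ))^{1+y/(a√λ)})^λ ≤ e^{-y²/(4a²)} + e^{-|φ(1/2)|y²/(a²W²)}
 + e^{-(log(1+W)-1)y√λ/a}`, where `φ(z) = z - (1+z)log(1+z)`. -/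
theorem poisson_tail_split_bound (a lam W y : ℝ)
    (ha : 0 < a) (hlam : 0 < lam) (hW : 2 < W) (hy : 0 < y)
    (φ : ℝ → ℝ) (hφ : φ = fun z => z - (1 + z) * Real.log (1 + z)) :
    (Real.exp (y / (a * Real.sqrt lam)) /
        (1 + y / (a * Real.sqrt lam)) ^ (1 + y / (a * Real.sqrt lam))) ^ lam
      ≤ Real.exp (-(y ^ 2) / (4 * a ^ 2))
        + Real.exp (-|φ (1 / 2)| * y ^ 2 / (a ^ 2 * W ^ 2))
        + Real.exp (-(Real.log (1 + W) - 1) * y * Real.sqrt lam / a) := by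
  obtain rfl : φ = poissonExponent := hφ
  obtain ⟨s, hs, rfl⟩ : ∃ s > 0, lam = s ^ 2 := ⟨√lam, sqrt_pos.2 hlam, (sq_sqrt hlam.le).symm⟩
  obtain ⟨z, hz, rfl⟩ : ∃ z > 0, y = z * (a * s) := ⟨y / (a * s), by positivity, by field_simp⟩
  rw [sqrt_sq hs.le, mul_div_cancel_right₀ _ (by positivity),
    rpow_exp_div_rpow_self_eq_exp_poissonExponent (by linarith)]
  have e₁ : -(z * (a * s)) ^ 2 / (4 * a ^ 2) = s ^ 2 * (-z ^ 2 / 4) := by field_simp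
  have e₂ : -|poissonExponent (1 / 2)| * (z * (a * s)) ^ 2 / (a ^ 2 * W ^ 2) =
      s ^ 2 * (-|poissonExponent (1 / 2)| * z ^ 2 / W ^ 2) := by field_simp
  have e₃ : -(log (1 + W) - 1) * (z * (a * s)) * s / a = s ^ 2 * (-(log (1 + W) - 1) * z) := by
    field_simp
  rw [e₁, e₂, e₃]
  exact exp_mul_le_add_add_of_le_or (sq_nonneg s)
    (poissonExponent_le_or_le_or_le hz.le (by linarith))
end
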